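/- A linear map φ : S_2 → S_2 is a 1/2-derivation of the Schrödinger algebra S_2 if and only if there exist θ, β ∈ ℂ such that φ(e) = θe, φ(f) = θf, φ(h) = θh, φ(x_i) = θx_i and φ(y_i) = θy_i for i = 1, 2, φ(z) = θz, and φ(s_{12}) = θs_{12} + βz. Equivalently, every 1/2-derivation of S_2 is of the form φ = θ·id + β·ℜ for some θ, β ∈ ℂ, where ℜ is the linear map with ℜ(s_{12}) = z and ℜ vanishing on the other basis elements. -/

import Mathlib

noncomputable section

open Submodule

/-- Index type for the standard basis
`{e, f, h, z, x_i, y_i (1 ≤ i ≤ n), s_{jk} (1 ≤ j < k ≤ n)}`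
of the Schrödinger algebra `S_n` (indices shifted to start from `0`). -/
inductive SIdx (n : ℕ) : Type where
  | E : SIdx n
  | F : SIdx n
  | H : SIdx n
  | Z : SIdx n
  | X : Fin n → SIdx n
  | Y : Fin n → SIdx n
  | S : (j k : Fin n) → j < k → SIdx n

/-- Kronecker delta with values in `ℂ`. -/
def kd {n : ℕ} (i j : Fin n) : ℂ := if i = j then 1 else 0

variable {n : ℕ} {L : Type*} [LieRing L] [LieAlgebra ℂ L]

/-- The element `s_{jk}` for arbitrary indices, with the convention
`s_{kj} = -s_{jk}` and `s_{jj} = 0`. -/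
def sg (b : Module.Basis (SIdx n) ℂ L) (j k : Fin n) : L :=
  if h : j < k then b (.S j k h)
  else if h' : k < j then - b (.S k j h')
  else 0

/-- A basis of a complex Lie algebra indexed by `SIdx n` realizes the
Schrödinger algebra `S_n` if the brackets of basis vectors are as follows
(all brackets of basis vectors not determined by the relations below and
anticommutativity are zero). -/
structure IsSchrodinger (b : Module.Basis (SIdx n) ℂ L) : Prop where
  lie_e_f : ⁅b .E, b .F⁆ = b .H
  lie_h_e : ⁅b .H, b .E⁆ = (2 : ℂ) • b .E
  lie_f_h : ⁅b .F, b .H⁆ = (2 : ℂ) • b .F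
  lie_x_y : ∀ i j, ⁅b (.X i), b (.Y j)⁆ = kd i j • b .Z
  lie_x_x : ∀ i j, ⁅b (.X i), b (.X j)⁆ = 0
  lie_y_y : ∀ i j, ⁅b (.Y i), b (.Y j)⁆ = 0
  lie_h_x : ∀ i, ⁅b .H, b (.X i)⁆ = b (.X i)
  lie_h_y : ∀ i, ⁅b .H, b (.Y i)⁆ = - b (.Y i)
  lie_e_y : ∀ i, ⁅b .E, b (.Y i)⁆ = b (.X i)
  lie_e_x : ∀ i, ⁅b .E, b (.X i)⁆ = 0
  lie_f_x : ∀ i, ⁅b .F, b (.X i)⁆ = b (.Y i)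
  lie_f_y : ∀ i, ⁅b .F, b (.Y i)⁆ = 0
  lie_z : ∀ u : SIdx n, ⁅b .Z, b u⁆ = 0
  lie_s_x : ∀ j k i, ⁅sg b j k, b (.X i)⁆ = kd k i • b (.X j) - kd j i • b (.X k)
  lie_s_y : ∀ j k i, ⁅sg b j k, b (.Y i)⁆ = kd k i • b (.Y j) - kd j i • b (.Y k)
  lie_s_s : ∀ j k l m, ⁅sg b j k, sg b l m⁆ =
      kd l k • sg b j m + kd j m • sg b k l + kd m k • sg b l j + kd l j • sg b m k
  lie_e_s : ∀ j k, ⁅b .E, sg b j k⁆ = 0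
  lie_f_s : ∀ j k, ⁅b .F, sg b j k⁆ = 0
  lie_h_s : ∀ j k, ⁅b .H, sg b j k⁆ = 0

/-- A `1/2`-derivation of a complex Lie algebra: a linear map `φ` with
`φ([x,y]) = (1/2)([φ(x),y] + [x,φ(y)])`. -/
def IsHalfDeriv (φ : L →ₗ[ℂ] L) : Prop :=
  ∀ x y : L, φ ⁅x, y⁆ = (2⁻¹ : ℂ) • (⁅φ x, y⁆ + ⁅x, φ y⁆)

/-- The set of basis vectors spanning the even part `(S_n)₀`:
`{e, f, h, z, s_{kl}}`. -/
def evenSet (b : Module.Basis (SIdx n) ℂ L) : Set L :=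
  {v | v = b .E ∨ v = b .F ∨ v = b .H ∨ v = b .Z ∨ ∃ j k, ∃ h : j < k, v = b (.S j k h)}

/-- The set of basis vectors spanning the odd part `(S_n)₁`: `{x_i, y_i}`. -/
def oddSet (b : Module.Basis (SIdx n) ℂ L) : Set L :=
  {v | ∃ i : Fin n, v = b (.X i) ∨ v = b (.Y i)}

/-!
Write `θ` for the `h`-coefficient of `φ(h)` and `ψ = φ - θ·id`, again a `1/2`-derivation.
The `sl₂`-relations `ψ(h) = ψ[e,f]`, `ψ[h,e] = 2ψ(e)`, `ψ[h,f] = -2ψ(f)` force `ψ(h) = 0`.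
Once `ψ(h) = 0`, the `1/2`-derivation identity for `[h,v] = λv` reads `[h,ψ(v)] = 2λ ψ(v)`:
`ψ` doubles `ad h`-weights. Since the weights of `S₂` are `0, ±1, ±2`, this gives
`ψ(e) = ψ(f) = 0`, `ψ(xᵢ) ∈ ℂe`, `ψ(yᵢ) ∈ ℂf` and `ψ(s) ∈ span {h, z, s}`, and the relations
`[e,yᵢ] = xᵢ`, `[x₁,y₁] = z`, `[s,x₁] = -x₂` leave only the `z`-component of `ψ(s)`.
Conversely, `θ·id` is a `1/2`-derivation, and so is every map into the centre `ℂz` that vanishes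
on `[S₂,S₂]`, which does not contain `s`.
-/

theorem IsHalfDeriv.sub_smul_id {φ : L →ₗ[ℂ] L} (hφ : IsHalfDeriv φ) (θ : ℂ) :
    IsHalfDeriv (φ - θ • LinearMap.id) := by
  intro x y
  simp only [LinearMap.sub_apply, LinearMap.smul_apply, LinearMap.id_apply,
    hφ x y, sub_lie, lie_sub, smul_lie, lie_smul]
  module

theorem IsHalfDeriv.lie_apply_of_lie_eq_smul {ψ : L →ₗ[ℂ] L} (hψ : IsHalfDeriv ψ) {a v : L}
    {μ : ℂ} (hv : ⁅a, v⁆ = μ • v) : ⁅a, ψ v⁆ = (2 * μ) • ψ v - ⁅ψ a, v⁆ := by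
  have h := hψ a v
  rw [hv, map_smul] at h
  linear_combination (norm := module) (-2 : ℂ) • h

theorem isHalfDeriv_smul_id_add (θ : ℂ) {ρ : L →ₗ[ℂ] L} (hρ : ∀ x y : L, ρ ⁅x, y⁆ = 0)
    (hρ_center : ∀ x y : L, ⁅ρ x, y⁆ = 0) : IsHalfDeriv (θ • LinearMap.id + ρ) := by
  intro x y
  have hρ_center' : ⁅x, ρ y⁆ = 0 := by rw [← lie_skew, hρ_center, neg_zero]
  simp only [LinearMap.add_apply, LinearMap.smul_apply, LinearMap.id_apply, hρ, add_lie, lie_add,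
    smul_lie, lie_smul, hρ_center, hρ_center']
  module

namespace Module.Basis

theorem sum_repr_of_repr_eq_zero {ι R M : Type*} [Fintype ι] [Semiring R] [AddCommMonoid M]
    [Module R M] (b : Module.Basis ι R M) {v : M} (s : Finset ι)
    (h : ∀ t ∉ s, b.repr v t = 0) : ∑ t ∈ s, b.repr v t • b t = v := by
  rw [Finset.sum_subset (Finset.subset_univ s) fun t _ ht => by simp [h t ht], b.sum_repr]

variable {ι R M : Type*} [CommRing R] [LieRing M] [LieAlgebra R M] (b : Module.Basis ι R M)

theorem repr_lie_eq_mul {a : M} {w : ι → R} (ha : ∀ t, ⁅a, b t⁆ = w t • b t) (v : M) (t : ι) :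
    b.repr ⁅a, v⁆ t = w t * b.repr v t := by
  have h : (b.coord t).comp (LieAlgebra.ad R M a) = w t • b.coord t := b.ext fun s => by
    by_cases hs : s = t <;> simp [ha, hs]
  simpa using LinearMap.congr_fun h v

theorem repr_eq_zero_of_lie_eq_smul [IsDomain R] {a v : M} {w : ι → R}
    (ha : ∀ t, ⁅a, b t⁆ = w t • b t) {μ : R} (hv : ⁅a, v⁆ = μ • v) {t : ι} (ht : w t ≠ μ) :
    b.repr v t = 0 := by
  have h := b.repr_lie_eq_mul ha v t
  rw [hv, map_smul, Finsupp.smul_apply, smul_eq_mul] at h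
  exact (mul_eq_mul_right_iff.1 h).resolve_left ht.symm

end Module.Basis

deriving instance DecidableEq, Fintype for SIdx

namespace SIdx

theorem univ_two : (Finset.univ : Finset (SIdx 2)) =
    {E, F, H, Z, X 0, X 1, Y 0, Y 1, S 0 1 (by decide)} := by
  decide

theorem forall_two {P : SIdx 2 → Prop} :
    (∀ u, P u) ↔ P E ∧ P F ∧ P H ∧ P Z ∧ P (X 0) ∧ P (X 1) ∧ P (Y 0) ∧ P (Y 1) ∧
      P (S 0 1 (by decide)) := by
  have h : (∀ u, P u) ↔ ∀ u ∈ (Finset.univ : Finset (SIdx 2)), P u := by simp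
  rw [h, univ_two]
  simp only [Finset.forall_mem_insert, Finset.mem_singleton, forall_eq]

def weight : SIdx n → ℤ
  | E => 2
  | F => -2
  | X _ => 1
  | Y _ => -1
  | _ => 0

end SIdx

open SIdx

theorem sg_zero_one (b : Module.Basis (SIdx 2) ℂ L) : sg b 0 1 = b (S 0 1 (by decide)) := by
  simp [sg]

namespace IsSchrodinger

variable {b : Module.Basis (SIdx 2) ℂ L}

theorem lie_h_f (hb : IsSchrodinger b) : ⁅b H, b F⁆ = (-2 : ℂ) • b F := by
  rw [← lie_skew, hb.lie_f_h, neg_smul]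

theorem lie_f_e (hb : IsSchrodinger b) : ⁅b F, b E⁆ = -b H := by
  rw [← lie_skew, hb.lie_e_f]

theorem lie_e_h (hb : IsSchrodinger b) : ⁅b E, b H⁆ = (-2 : ℂ) • b E := by
  rw [← lie_skew, hb.lie_h_e, neg_smul]

theorem lie_basis_z (hb : IsSchrodinger b) (u : SIdx 2) : ⁅b u, b Z⁆ = 0 := by
  rw [← lie_skew, hb.lie_z, neg_zero]

theorem lie_s01_x (hb : IsSchrodinger b) (i : Fin 2) :
    ⁅b (S 0 1 (by decide)), b (X i)⁆ = kd 1 i • b (X 0) - kd 0 i • b (X 1) := by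
  rw [← sg_zero_one, hb.lie_s_x]

theorem lie_s01_y (hb : IsSchrodinger b) (i : Fin 2) :
    ⁅b (S 0 1 (by decide)), b (Y i)⁆ = kd 1 i • b (Y 0) - kd 0 i • b (Y 1) := by
  rw [← sg_zero_one, hb.lie_s_y]

theorem lie_e_s01 (hb : IsSchrodinger b) : ⁅b E, b (S 0 1 (by decide))⁆ = 0 := by
  rw [← sg_zero_one, hb.lie_e_s]

theorem lie_f_s01 (hb : IsSchrodinger b) : ⁅b F, b (S 0 1 (by decide))⁆ = 0 := by
  rw [← sg_zero_one, hb.lie_f_s]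

theorem lie_h_s01 (hb : IsSchrodinger b) : ⁅b H, b (S 0 1 (by decide))⁆ = 0 := by
  rw [← sg_zero_one, hb.lie_h_s]

theorem lie_h_basis (hb : IsSchrodinger b) (t : SIdx 2) :
    ⁅b H, b t⁆ = (t.weight : ℂ) • b t := by
  revert t
  refine forall_two.2 ⟨?_, ?_, ?_, ?_, ?_, ?_, ?_, ?_, ?_⟩ <;>
    simp [weight, hb.lie_h_e, hb.lie_h_f, hb.lie_h_x, hb.lie_h_y, hb.lie_h_s01, hb.lie_basis_z]

theorem lie_e_eq_repr (hb : IsSchrodinger b) (v : L) :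
    ⁅b E, v⁆ = b.repr v F • b H - (2 * b.repr v H) • b E + b.repr v (Y 0) • b (X 0)
      + b.repr v (Y 1) • b (X 1) := by
  conv_lhs => rw [← b.sum_repr v]
  simp [univ_two, hb.lie_e_f, hb.lie_e_h, hb.lie_basis_z, hb.lie_e_x, hb.lie_e_y, hb.lie_e_s01]
  module

theorem lie_f_eq_repr (hb : IsSchrodinger b) (v : L) :
    ⁅b F, v⁆ = -b.repr v E • b H + (2 * b.repr v H) • b F + b.repr v (X 0) • b (Y 0)
      + b.repr v (X 1) • b (Y 1) := by
  conv_lhs => rw [← b.sum_repr v]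
  simp [univ_two, hb.lie_f_e, hb.lie_f_h, hb.lie_basis_z, hb.lie_f_x, hb.lie_f_y, hb.lie_f_s01]
  module

theorem lie_z_left (hb : IsSchrodinger b) (y : L) : ⁅b Z, y⁆ = 0 := by
  rw [← b.sum_repr y]
  simp only [lie_sum, lie_smul, hb.lie_z, smul_zero, Finset.sum_const_zero]

theorem repr_lie_s_eq_zero (hb : IsSchrodinger b) (x y : L) :
    b.repr ⁅x, y⁆ (S 0 1 (by decide)) = 0 := by
  suffices h : ∀ u w, b.repr ⁅b u, b w⁆ (S 0 1 (by decide)) = 0 ∨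
      b.repr ⁅b w, b u⁆ (S 0 1 (by decide)) = 0 by
    have hB : (LieModule.toEnd ℂ L L : L →ₗ[ℂ] Module.End ℂ L).compr₂
        (b.coord (S 0 1 (by decide))) = 0 :=
      LinearMap.ext_basis b b fun u w => by
        simpa using (h u w).elim id fun h' => by
          rw [← lie_skew, map_neg, Finsupp.neg_apply, h', neg_zero]
    simpa using LinearMap.congr_fun₂ hB x y
  simp [forall_two, hb.lie_e_f, hb.lie_h_e, hb.lie_f_h, hb.lie_x_y, hb.lie_x_x, hb.lie_y_y,
    hb.lie_h_x, hb.lie_h_y, hb.lie_e_y, hb.lie_e_x, hb.lie_f_x, hb.lie_f_y, hb.lie_z,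
    hb.lie_s01_x, hb.lie_s01_y, hb.lie_e_s01, hb.lie_f_s01, hb.lie_h_s01, hb.lie_h_f, hb.lie_f_e,
    hb.lie_e_h, hb.lie_basis_z]

variable {ψ : L →ₗ[ℂ] L}

theorem halfDeriv_apply_h_eq_zero (hb : IsSchrodinger b) (hψ : IsHalfDeriv ψ)
    (hτ : b.repr (ψ (b H)) H = 0) : ψ (b H) = 0 := by
  have hE := hψ.lie_apply_of_lie_eq_smul hb.lie_h_e
  have hF := hψ.lie_apply_of_lie_eq_smul hb.lie_h_f
  have hEF := hψ (b E) (b F)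
  rw [← lie_skew (ψ (b H)), hb.lie_e_eq_repr] at hE
  rw [← lie_skew (ψ (b H)), hb.lie_f_eq_repr] at hF
  rw [hb.lie_e_f, ← lie_skew (ψ (b E)), hb.lie_e_eq_repr, hb.lie_f_eq_repr] at hEF
  set τ := ψ (b H)
  have cE := fun t => congrArg (fun v => b.repr v t) hE
  have cF := fun t => congrArg (fun v => b.repr v t) hF
  have cEF := fun t => congrArg (fun v => b.repr v t) hEF
  simp only [b.repr_lie_eq_mul hb.lie_h_basis, map_add, map_sub, map_neg, map_smul,
    Module.Basis.repr_self, Finsupp.add_apply, Finsupp.sub_apply, Finsupp.neg_apply,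
    Finsupp.smul_apply, Finsupp.single_apply, smul_eq_mul] at cE cF cEF
  -- `cE` and `cF` express the coordinates of `ψ e` and `ψ f` through those of `τ = ψ h`; inserted
  -- into `cEF` they give `τₜ = τₜ/4` for `t = e, f`, `τₜ = τₜ/6` for `t = xᵢ, yᵢ`, `τₜ = 0` for
  -- `t = z, s`.
  refine b.ext_elem (forall_two.2 ⟨?_, ?_, ?_, ?_, ?_, ?_, ?_, ?_, ?_⟩)
  · have h1 := cEF E; have h2 := cF H; simp [weight] at h1 h2 ⊢; grind
  · have h1 := cEF F; have h2 := cE H; simp [weight] at h1 h2 ⊢; grind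
  · simpa using hτ
  · simpa using cEF Z
  · have h1 := cEF (X 0); have h2 := cF (Y 0); simp [weight] at h1 h2 ⊢; grind
  · have h1 := cEF (X 1); have h2 := cF (Y 1); simp [weight] at h1 h2 ⊢; grind
  · have h1 := cEF (Y 0); have h2 := cE (X 0); simp [weight] at h1 h2 ⊢; grind
  · have h1 := cEF (Y 1); have h2 := cE (X 1); simp [weight] at h1 h2 ⊢; grind
  · simpa using cEF (S 0 1 (by decide))

theorem repr_halfDeriv_apply_eq_zero (hb : IsSchrodinger b) (hψ : IsHalfDeriv ψ)
    (hψh : ψ (b H) = 0) (u : SIdx 2) {t : SIdx 2} (ht : t.weight ≠ 2 * u.weight) :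
    b.repr (ψ (b u)) t = 0 :=
  b.repr_eq_zero_of_lie_eq_smul hb.lie_h_basis
    (by simpa [hψh] using hψ.lie_apply_of_lie_eq_smul (hb.lie_h_basis u)) (by exact_mod_cast ht)

theorem halfDeriv_apply_e_eq_zero (hb : IsSchrodinger b) (hψ : IsHalfDeriv ψ)
    (hψh : ψ (b H) = 0) : ψ (b E) = 0 :=
  b.ext_elem fun t => by
    simpa using hb.repr_halfDeriv_apply_eq_zero hψ hψh E (by revert t; decide)

theorem halfDeriv_apply_f_eq_zero (hb : IsSchrodinger b) (hψ : IsHalfDeriv ψ)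
    (hψh : ψ (b H) = 0) : ψ (b F) = 0 :=
  b.ext_elem fun t => by
    simpa using hb.repr_halfDeriv_apply_eq_zero hψ hψh F (by revert t; decide)

theorem halfDeriv_apply_x_y_eq_zero (hb : IsSchrodinger b) (hψ : IsHalfDeriv ψ)
    (hψh : ψ (b H) = 0) (i : Fin 2) : ψ (b (X i)) = 0 ∧ ψ (b (Y i)) = 0 := by
  obtain ⟨a, hx⟩ : ∃ a : ℂ, ψ (b (X i)) = a • b E := ⟨_, by
    simpa using (b.sum_repr_of_repr_eq_zero {E} fun t ht =>
      hb.repr_halfDeriv_apply_eq_zero hψ hψh (X i) (by revert t; simp only [weight]; decide)).symm⟩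
  obtain ⟨c, hy⟩ : ∃ c : ℂ, ψ (b (Y i)) = c • b F := ⟨_, by
    simpa using (b.sum_repr_of_repr_eq_zero {F} fun t ht =>
      hb.repr_halfDeriv_apply_eq_zero hψ hψh (Y i) (by revert t; simp only [weight]; decide)).symm⟩
  have h : a • b E = (2⁻¹ * c) • b H := by
    simpa [hb.lie_e_y, hb.halfDeriv_apply_e_eq_zero hψ hψh, hx, hy, hb.lie_e_f, smul_smul]
      using hψ (b E) (b (Y i))
  have ha : a = 0 := by simpa using congrArg (fun v => b.repr v E) h
  have hc : c = 0 := by simpa using congrArg (fun v => b.repr v H) h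
  simp [hx, hy, ha, hc]

theorem halfDeriv_apply_z_eq_zero (hb : IsSchrodinger b) (hψ : IsHalfDeriv ψ)
    (hψh : ψ (b H) = 0) : ψ (b Z) = 0 := by
  obtain ⟨hx, hy⟩ := hb.halfDeriv_apply_x_y_eq_zero hψ hψh 0
  simpa [hb.lie_x_y, kd, hx, hy] using hψ (b (X 0)) (b (Y 0))

theorem exists_halfDeriv_apply_s_eq_smul_z (hb : IsSchrodinger b) (hψ : IsHalfDeriv ψ)
    (hψh : ψ (b H) = 0) : ∃ β : ℂ, ψ (b (S 0 1 (by decide))) = β • b Z := by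
  obtain ⟨p, q, r, hs⟩ : ∃ p q r : ℂ,
      ψ (b (S 0 1 (by decide))) = p • b H + q • b Z + r • b (S 0 1 (by decide)) := ⟨_, _, _, by
    simpa [add_assoc] using (b.sum_repr_of_repr_eq_zero {H, Z, S 0 1 (by decide)} fun t ht =>
      hb.repr_halfDeriv_apply_eq_zero hψ hψh _ (by revert t; decide)).symm⟩
  have h : ⁅ψ (b (S 0 1 (by decide))), b (X 0)⁆ = 0 := by
    simpa [hb.lie_s01_x, kd, (hb.halfDeriv_apply_x_y_eq_zero hψ hψh _).1]
      using (hψ (b (S 0 1 (by decide))) (b (X 0))).symm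
  rw [hs] at h
  have hp : p = 0 := by
    simpa [hb.lie_h_x, hb.lie_z, hb.lie_s01_x, kd] using congrArg (fun v => b.repr v (X 0)) h
  have hr : r = 0 := by
    simpa [hb.lie_h_x, hb.lie_z, hb.lie_s01_x, kd] using congrArg (fun v => b.repr v (X 1)) h
  exact ⟨q, by simp [hs, hp, hr]⟩

end IsSchrodinger

/-- A linear map `φ` on the Schrödinger algebra `S₂` is a
`1/2`-derivation if and only if there exist `θ, β ∈ ℂ` with `φ(e) = θe`,
`φ(f) = θf`, `φ(h) = θh`, `φ(x_i) = θx_i`, `φ(y_i) = θy_i`, `φ(z) = θz` and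
`φ(s₁₂) = θs₁₂ + βz`; equivalently, `φ = θ·id + β·ℜ`. -/
theorem half_derivation_S2_iff
    (L : Type*) [LieRing L] [LieAlgebra ℂ L]
    (b : Module.Basis (SIdx 2) ℂ L) (hb : IsSchrodinger b)
    (φ : L →ₗ[ℂ] L) :
    IsHalfDeriv φ ↔ ∃ θ β : ℂ,
      φ (b .E) = θ • b .E ∧
      φ (b .F) = θ • b .F ∧
      φ (b .H) = θ • b .H ∧
      (∀ i : Fin 2, φ (b (.X i)) = θ • b (.X i)) ∧
      (∀ i : Fin 2, φ (b (.Y i)) = θ • b (.Y i)) ∧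
      φ (b .Z) = θ • b .Z ∧
      φ (b (.S 0 1 (by decide))) = θ • b (.S 0 1 (by decide)) + β • b .Z := by
  constructor
  · intro hφ
    set θ := b.repr (φ (b H)) H
    set ψ := φ - θ • LinearMap.id
    have hψ : IsHalfDeriv ψ := hφ.sub_smul_id θ
    have hψh : ψ (b H) = 0 := hb.halfDeriv_apply_h_eq_zero hψ (by simp [ψ, θ])
    have hφψ : ∀ v, φ v = θ • v + ψ v := fun v => by simp [ψ]
    obtain ⟨β, hs⟩ := hb.exists_halfDeriv_apply_s_eq_smul_z hψ hψh
    refine ⟨θ, β, ?_, ?_, ?_, fun i => ?_, fun i => ?_, ?_, ?_⟩ <;> rw [hφψ]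
    · simp [hb.halfDeriv_apply_e_eq_zero hψ hψh]
    · simp [hb.halfDeriv_apply_f_eq_zero hψ hψh]
    · simp [hψh]
    · simp [(hb.halfDeriv_apply_x_y_eq_zero hψ hψh i).1]
    · simp [(hb.halfDeriv_apply_x_y_eq_zero hψ hψh i).2]
    · simp [hb.halfDeriv_apply_z_eq_zero hψ hψh]
    · rw [hs]
  · rintro ⟨θ, β, hE, hF, hH, hX, hY, hZ, hS⟩
    have hφ : φ = θ • LinearMap.id + (β • b.coord (S 0 1 (by decide))).smulRight (b Z) := by
      refine b.ext (forall_two.2 ⟨?_, ?_, ?_, ?_, ?_, ?_, ?_, ?_, ?_⟩) <;>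
        simp [hE, hF, hH, hX, hY, hZ, hS]
    rw [hφ]
    exact isHalfDeriv_smul_id_add θ (fun x y => by simp [hb.repr_lie_s_eq_zero])
      (fun x y => by simp [hb.lie_z_left])
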